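/- On the IP Lie algebroid, with basis {Γ₀, H_i, W_i} where Γ₀ = T₀ + w^j e_j + γ^j W_j and H_i = e_i − λ_i^j W_j with λ_i^j = (1/2)(w^k C_{ki}^j − ∂γ^j/∂w^i), the brackets are: ⟦Γ₀, W_i⟧ = −H_i + λ_i^j W_j; ⟦Γ₀, H_i⟧ = λ_i^j H_j + φ_i^j W_j; ⟦H_i, W_j⟧ = (C_{ij}^k + λ_{ij}^k) W_k; ⟦H_i, H_j⟧ = C_{ij}^k H_k + r_{ij}^k W_k, where φ_i^j = −w^k C_{ki}^l ∂γ^j/∂w^l − γ^k C_{ik}^j − γ(λ_i^j) − λ_i^k λ_k^j, λ_{ij}^k = ∂λ_i^k/∂w^j, and r_{ij}^k = (w^l C_{lj}^m λ_{im}^k − w^l C_{li}^m λ_{jm}^k + λ_i^l λ_{jl}^k − λ_j^l λ_{il}^k) + C_{ij}^l λ_l^k + λ_i^l C_{jl}^k − λ_j^l C_{il}^k. In particular r_{ij}^k = −r_{ji}^k. -/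
import Mathlib


open scoped BigOperators

noncomputable section

namespace IP

/-- Functions on `M = ℝ × 𝔤 ≃ ℝ × ℝⁿ`, coordinates `(t, w)`. -/
abbrev F (n : ℕ) := ℝ × (Fin n → ℝ) → ℝ

/-- `∂f/∂t`. -/
def Dt {n : ℕ} (f : F n) (z : ℝ × (Fin n → ℝ)) : ℝ := fderiv ℝ f z (1, 0)

/-- `∂f/∂w^i`. -/
def Dw {n : ℕ} (i : Fin n) (f : F n) (z : ℝ × (Fin n → ℝ)) : ℝ :=
  fderiv ℝ f z (0, Pi.single i 1)

/-- Sections of the IP Lie algebroid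
`A = ℝ × 𝔤 × ℝ × 𝔤 × 𝔤 → M = ℝ × 𝔤`: coefficients `(b, ξ, η)` with respect to the
basis of sections `(T₀, e_i, W_i)`. -/
abbrev Sec (n : ℕ) := F n × (Fin n → F n) × (Fin n → F n)

/-- The anchor of the IP Lie algebroid, `ρ(T₀) = ∂/∂t`,
`ρ(e_i) = w^k C_{ki}^j ∂/∂w^j`, `ρ(W_i) = ∂/∂w^i`, as a differential operator;
`C` are the structure constants of `𝔤`. -/
def Dop {n : ℕ} (C : Fin n → Fin n → Fin n → ℝ) (X : Sec n) (f : F n) : F n :=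
  fun z =>
    X.1 z * Dt f z
      + (∑ j, X.2.1 j z * ∑ k, ∑ l, z.2 k * C k j l * Dw l f z)
      + ∑ i, X.2.2 i z * Dw i f z

/-- The bracket of the IP Lie algebroid, the Leibniz extension of
`⟦T₀,e_i⟧ = ⟦T₀,W_i⟧ = 0`, `⟦e_i,e_j⟧ = C_{ij}^k e_k`, `⟦e_i,W_j⟧ = C_{ij}^k W_k`,
`⟦W_i,W_j⟧ = 0`. -/
def br {n : ℕ} (C : Fin n → Fin n → Fin n → ℝ) (X Y : Sec n) : Sec n :=
  (fun z => Dop C X Y.1 z - Dop C Y X.1 z,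
   fun l => fun z => Dop C X (Y.2.1 l) z - Dop C Y (X.2.1 l) z
     + ∑ i, ∑ j, C i j l * X.2.1 i z * Y.2.1 j z,
   fun l => fun z => Dop C X (Y.2.2 l) z - Dop C Y (X.2.2 l) z
     + ∑ i, ∑ j, C i j l * (X.2.1 i z * Y.2.2 j z - Y.2.1 i z * X.2.2 j z))

/-- The basis section `W_i`. -/
def W {n : ℕ} (i : Fin n) : Sec n :=
  (fun _ => 0, fun _ => fun _ => 0, fun j => fun _ => if j = i then 1 else 0)

/-- The section `Γ₀ = T₀ + w^j e_j + γ^j W_j`. -/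
def Γ0 {n : ℕ} (γ : Fin n → F n) : Sec n :=
  (fun _ => 1, fun j => fun z => z.2 j, fun j => γ j)

/-- `λ_i^j = (1/2)(w^k C_{ki}^j − ∂γ^j/∂w^i)`. -/
def lam {n : ℕ} (C : Fin n → Fin n → Fin n → ℝ) (γ : Fin n → F n)
    (i j : Fin n) : F n := fun z =>
  (1 / 2) * ((∑ k, z.2 k * C k i j) - Dw i (γ j) z)

/-- The section `H_i = e_i − λ_i^j W_j`. -/
def Hs {n : ℕ} (C : Fin n → Fin n → Fin n → ℝ) (γ : Fin n → F n) (i : Fin n) :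
    Sec n :=
  (fun _ => 0, fun j => fun _ => if j = i then 1 else 0,
   fun j => fun z => - lam C γ i j z)

/-- The reduced vector field `γ = ∂/∂t + γ^i ∂/∂w^i` acting on a function. -/
def gamD {n : ℕ} (γ : Fin n → F n) (f : F n) : F n := fun z =>
  Dt f z + ∑ l, γ l z * Dw l f z

/-- `φ_i^j = −w^k C_{ki}^l ∂γ^j/∂w^l − γ^k C_{ik}^j − γ(λ_i^j) − λ_i^k λ_k^j`. -/
def phi {n : ℕ} (C : Fin n → Fin n → Fin n → ℝ) (γ : Fin n → F n)
    (i j : Fin n) : F n := fun z =>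
  -(∑ k, ∑ l, z.2 k * C k i l * Dw l (γ j) z) - (∑ k, γ k z * C i k j)
    - gamD γ (lam C γ i j) z - ∑ k, lam C γ i k z * lam C γ k j z

/-- `λ_{ij}^k = ∂λ_i^k/∂w^j`. -/
def lamd {n : ℕ} (C : Fin n → Fin n → Fin n → ℝ) (γ : Fin n → F n)
    (i j k : Fin n) : F n := fun z => Dw j (lam C γ i k) z

/-- `r_{ij}^k`. -/
def rr {n : ℕ} (C : Fin n → Fin n → Fin n → ℝ) (γ : Fin n → F n)
    (i j k : Fin n) : F n := fun z =>
  ((∑ l, ∑ m, z.2 l * C l j m * lamd C γ i m k z)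
      - (∑ l, ∑ m, z.2 l * C l i m * lamd C γ j m k z)
      + ∑ l, (lam C γ i l z * lamd C γ j l k z - lam C γ j l z * lamd C γ i l k z))
    + (∑ l, C i j l * lam C γ l k z)
    + ∑ l, (lam C γ i l z * C j l k - lam C γ j l z * C i l k)

/-- Multiplication of a section by a function. -/
def smulS {n : ℕ} (f : F n) (X : Sec n) : Sec n :=
  (fun z => f z * X.1 z, fun j => fun z => f z * X.2.1 j z,
   fun j => fun z => f z * X.2.2 j z)

end IP

end

open IP


namespace IPAux
open IP

lemma Dt_const {n : ℕ} (c : ℝ) (z : ℝ × (Fin n → ℝ)) :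
    Dt (n := n) (fun _ => c) z = 0 := by
  simp [Dt]

lemma Dw_const {n : ℕ} (i : Fin n) (c : ℝ) (z : ℝ × (Fin n → ℝ)) :
    Dw (n := n) i (fun _ => c) z = 0 := by
  simp [Dw]

lemma Dw_coord {n : ℕ} (i j : Fin n) (z : ℝ × (Fin n → ℝ)) :
    Dw i (fun z => z.2 j) z = if j = i then 1 else 0 := by
  have h : (fun z : ℝ × (Fin n → ℝ) => z.2 j)
      = ((ContinuousLinearMap.proj j).comp (ContinuousLinearMap.snd ℝ ℝ (Fin n → ℝ))) := rfl
  rw [Dw, h, ContinuousLinearMap.fderiv]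
  simp [Pi.single_apply]

lemma Dt_coord {n : ℕ} (j : Fin n) (z : ℝ × (Fin n → ℝ)) :
    Dt (fun z => z.2 j) z = 0 := by
  have h : (fun z : ℝ × (Fin n → ℝ) => z.2 j)
      = ((ContinuousLinearMap.proj j).comp (ContinuousLinearMap.snd ℝ ℝ (Fin n → ℝ))) := rfl
  rw [Dt, h, ContinuousLinearMap.fderiv]
  simp

lemma Dt_neg {n : ℕ} (f : F n) (z : ℝ × (Fin n → ℝ)) :
    Dt (fun z => - f z) z = - Dt f z := by
  simp [Dt, fderiv_neg]

lemma Dw_neg {n : ℕ} (i : Fin n) (f : F n) (z : ℝ × (Fin n → ℝ)) :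
    Dw i (fun z => - f z) z = - Dw i f z := by
  simp [Dw, fderiv_neg]

lemma skew_cancel {n : ℕ} (C : Fin n → Fin n → Fin n → ℝ)
    (hC : ∀ i j l, C i j l = - C j i l) (w : Fin n → ℝ) (g : Fin n → ℝ) (l : Fin n) :
    ∑ j, ∑ k, w j * w k * C k j l = 0 := by
  have e1 : (∑ j, ∑ k, w j * w k * C k j l) = ∑ k, ∑ j, w j * w k * C k j l :=
    Finset.sum_comm
  have e2 : (∑ k : Fin n, ∑ j : Fin n, w j * w k * C k j l)
      = ∑ j : Fin n, ∑ k : Fin n, -(w j * w k * C k j l) := by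
    refine Finset.sum_congr rfl fun j _ => Finset.sum_congr rfl fun k _ => ?_
    rw [hC k j l]; ring
  have := e1.trans e2
  simp only [Finset.sum_neg_distrib] at this
  linarith

lemma skew_term {n : ℕ} (C : Fin n → Fin n → Fin n → ℝ)
    (hC : ∀ i j l, C i j l = - C j i l) (w : Fin n → ℝ) (g : Fin n → ℝ) :
    ∑ x, w x * ∑ x1, ∑ x2, w x1 * C x1 x x2 * g x2 = 0 := by
  have h1 : ∀ x : Fin n, w x * ∑ x1, ∑ x2, w x1 * C x1 x x2 * g x2
      = ∑ x2, (∑ x1, w x * w x1 * C x1 x x2) * g x2 := by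
    intro x
    simp_rw [Finset.mul_sum]
    rw [Finset.sum_comm]
    refine Finset.sum_congr rfl fun x2 _ => ?_
    rw [Finset.sum_mul]
    exact Finset.sum_congr rfl fun x1 _ => by ring
  rw [Finset.sum_congr rfl fun x _ => h1 x, Finset.sum_comm]
  refine Finset.sum_eq_zero fun x2 _ => ?_
  rw [← Finset.sum_mul]
  rw [show (∑ x : Fin n, ∑ x1 : Fin n, w x * w x1 * C x1 x x2) = 0 from
    skew_cancel C hC w (fun _ => 0) x2]
  exact zero_mul _

end IPAux
set_option maxHeartbeats 2000000 in
/-- On the IP Lie algebroid, with basis `{Γ₀, H_i, W_i}` where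
`Γ₀ = T₀ + w^j e_j + γ^j W_j` and `H_i = e_i − λ_i^j W_j` with
`λ_i^j = (1/2)(w^k C_{ki}^j − ∂γ^j/∂w^i)`, the brackets are:
`⟦Γ₀, W_i⟧ = −H_i + λ_i^j W_j`; `⟦Γ₀, H_i⟧ = λ_i^j H_j + φ_i^j W_j`;
`⟦H_i, W_j⟧ = (C_{ij}^k + λ_{ij}^k) W_k`; `⟦H_i, H_j⟧ = C_{ij}^k H_k + r_{ij}^k W_k`;
in particular `r_{ij}^k = −r_{ji}^k`. -/
theorem IP_bracket_relations {n : ℕ}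
    (C : Fin n → Fin n → Fin n → ℝ) (γ : Fin n → F n)
    (hCskew : ∀ i j l, C i j l = - C j i l)
    (hCjac : ∀ i j k l,
      (∑ m, (C i j m * C m k l + C j k m * C m i l + C k i m * C m j l)) = 0)
    (hγ : ∀ j, ContDiff ℝ (⊤ : ℕ∞) (γ j)) :
    (∀ i, br C (Γ0 γ) (W i) = - Hs C γ i + ∑ j, smulS (lam C γ i j) (W j))
    ∧ (∀ i, br C (Γ0 γ) (Hs C γ i)
        = (∑ j, smulS (lam C γ i j) (Hs C γ j)) + ∑ j, smulS (phi C γ i j) (W j))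
    ∧ (∀ i j, br C (Hs C γ i) (W j)
        = ∑ k, smulS (fun z => C i j k + lamd C γ i j k z) (W k))
    ∧ (∀ i j, br C (Hs C γ i) (Hs C γ j)
        = (∑ k, smulS (fun _ => C i j k) (Hs C γ k)) + ∑ k, smulS (rr C γ i j k) (W k))
    ∧ (∀ i j k, rr C γ i j k = - rr C γ j i k) := by
  classical
  open IPAux in
  refine ⟨fun i => ?_, fun i => ?_, fun i j => ?_, fun i j => ?_, fun i j k => ?_⟩
  · refine Prod.ext ?_ (Prod.ext ?_ ?_)
    · funext z
      simp [br, Dop, W, Hs, Γ0, smulS, Prod.fst_sum, Prod.snd_sum, Finset.sum_apply,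
        Prod.fst_neg, Prod.snd_neg, Pi.neg_apply,
        Dt_const, Dw_const, Dw_coord, Dt_coord, Dt_neg, Dw_neg,
        mul_ite, ite_mul, Finset.sum_ite_eq, Finset.sum_ite_eq']
    · funext l z
      simp [br, Dop, W, Hs, Γ0, smulS, Prod.fst_sum, Prod.snd_sum, Finset.sum_apply,
        Prod.fst_neg, Prod.snd_neg, Pi.neg_apply,
        Dt_const, Dw_const, Dw_coord, Dt_coord, Dt_neg, Dw_neg,
        mul_ite, ite_mul, Finset.sum_ite_eq, Finset.sum_ite_eq']
    · funext l z
      simp [br, Dop, W, Hs, Γ0, smulS, Prod.fst_sum, Prod.snd_sum, Finset.sum_apply,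
        Prod.fst_neg, Prod.snd_neg, Pi.neg_apply,
        Dt_const, Dw_const, Dw_coord, Dt_coord, Dt_neg, Dw_neg,
        mul_ite, ite_mul, Finset.sum_ite_eq, Finset.sum_ite_eq']
      simp only [lam]
      rw [show ∑ x : Fin n, C x i l * z.2 x = ∑ x : Fin n, z.2 x * C x i l from
        Finset.sum_congr rfl fun x _ => mul_comm _ _]
      ring
  · refine Prod.ext ?_ (Prod.ext ?_ ?_)
    · funext z
      simp [br, Dop, W, Hs, Γ0, smulS, Prod.fst_sum, Prod.snd_sum, Finset.sum_apply,
        Dt_const, Dw_const, Dw_coord, Dt_coord, Dt_neg, Dw_neg,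
        mul_ite, ite_mul, Finset.sum_ite_eq, Finset.sum_ite_eq']
    · funext l z
      simp [br, Dop, W, Hs, Γ0, smulS, Prod.fst_sum, Prod.snd_sum, Finset.sum_apply,
        Dt_const, Dw_const, Dw_coord, Dt_coord, Dt_neg, Dw_neg,
        mul_ite, ite_mul, Finset.sum_ite_eq, Finset.sum_ite_eq']
      rw [show ∑ x : Fin n, C x i l * z.2 x = ∑ x : Fin n, z.2 x * C x i l from
        Finset.sum_congr rfl fun x _ => mul_comm _ _]
      ring
    · funext l z
      simp [br, Dop, W, Hs, Γ0, smulS, phi, gamD, Prod.fst_sum, Prod.snd_sum,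
        Finset.sum_apply,
        Dt_const, Dw_const, Dw_coord, Dt_coord, Dt_neg, Dw_neg,
        mul_ite, ite_mul, Finset.sum_ite_eq, Finset.sum_ite_eq']
      have hK : (∑ x : Fin n, z.2 x *
            ∑ x1 : Fin n, ∑ x2 : Fin n, z.2 x1 * C x1 x x2 * Dw x2 (lam C γ i l) z) = 0 :=
        skew_term C hCskew z.2 _
      have hT : (∑ x : Fin n, ∑ x1 : Fin n,
            C x x1 l * (-(z.2 x * lam C γ i x1 z) - if x = i then γ x1 z else 0))
          = -(∑ x1 : Fin n, (∑ x : Fin n, z.2 x * C x x1 l) * lam C γ i x1 z)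
            - ∑ x1 : Fin n, γ x1 z * C i x1 l := by
        rw [Finset.sum_comm]
        have h1 : ∀ x1 : Fin n, (∑ x : Fin n,
              C x x1 l * (-(z.2 x * lam C γ i x1 z) - if x = i then γ x1 z else 0))
            = -((∑ x : Fin n, z.2 x * C x x1 l) * lam C γ i x1 z) - γ x1 z * C i x1 l := by
          intro x1
          have h2 : ∀ x : Fin n,
              C x x1 l * (-(z.2 x * lam C γ i x1 z) - if x = i then γ x1 z else 0)
              = -(z.2 x * C x x1 l * lam C γ i x1 z)
                - (if x = i then C x x1 l * γ x1 z else 0) := by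
            intro x; by_cases hx : x = i <;> simp [hx] <;> ring
          rw [Finset.sum_congr rfl fun x _ => h2 x, Finset.sum_sub_distrib]
          simp [Finset.sum_ite_eq', Finset.sum_neg_distrib, Finset.sum_mul]
          ring
        rw [Finset.sum_congr rfl fun x1 _ => h1 x1, Finset.sum_sub_distrib,
          Finset.sum_neg_distrib]
      have key : (∑ x : Fin n, lam C γ i x z * Dw x (γ l) z)
            - (∑ x1 : Fin n, (∑ x : Fin n, z.2 x * C x x1 l) * lam C γ i x1 z)
          = -(2 * ∑ x : Fin n, lam C γ i x z * lam C γ x l z) := by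
        rw [← Finset.sum_sub_distrib]
        have h3 : ∀ x : Fin n, lam C γ i x z * Dw x (γ l) z
              - (∑ y : Fin n, z.2 y * C y x l) * lam C γ i x z
            = -(2 * (lam C γ i x z * lam C γ x l z)) := by
          intro x
          have hl : lam C γ x l z = (1/2) * ((∑ y : Fin n, z.2 y * C y x l) - Dw x (γ l) z) := rfl
          rw [hl]; ring
        rw [Finset.sum_congr rfl fun x _ => h3 x, Finset.sum_neg_distrib, ← Finset.mul_sum]
      linear_combination hT + key - hK
  · refine Prod.ext ?_ (Prod.ext ?_ ?_)
    · funext z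
      simp [br, Dop, W, Hs, smulS, Prod.fst_sum, Prod.snd_sum, Finset.sum_apply,
        Dt_const, Dw_const, Dw_coord, Dt_coord, Dt_neg, Dw_neg, lamd,
        mul_ite, ite_mul, Finset.sum_ite_eq, Finset.sum_ite_eq']
    · funext l z
      simp [br, Dop, W, Hs, smulS, Prod.fst_sum, Prod.snd_sum, Finset.sum_apply,
        Dt_const, Dw_const, Dw_coord, Dt_coord, Dt_neg, Dw_neg, lamd,
        mul_ite, ite_mul, Finset.sum_ite_eq, Finset.sum_ite_eq']
    · funext l z
      simp [br, Dop, W, Hs, smulS, Prod.fst_sum, Prod.snd_sum, Finset.sum_apply,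
        Dt_const, Dw_const, Dw_coord, Dt_coord, Dt_neg, Dw_neg, lamd,
        mul_ite, ite_mul, Finset.sum_ite_eq, Finset.sum_ite_eq']
      ring
  · refine Prod.ext ?_ (Prod.ext ?_ ?_)
    · funext z
      simp [br, Dop, W, Hs, Γ0, smulS, Prod.fst_sum, Prod.snd_sum, Finset.sum_apply,
        Dt_const, Dw_const, Dw_coord, Dt_coord, Dt_neg, Dw_neg,
        mul_ite, ite_mul, Finset.sum_ite_eq, Finset.sum_ite_eq']
    · funext l z
      simp [br, Dop, W, Hs, Γ0, smulS, Prod.fst_sum, Prod.snd_sum, Finset.sum_apply,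
        Dt_const, Dw_const, Dw_coord, Dt_coord, Dt_neg, Dw_neg,
        mul_ite, ite_mul, Finset.sum_ite_eq, Finset.sum_ite_eq']
    · funext l z
      simp [br, Dop, W, Hs, Γ0, smulS, rr, lamd, Prod.fst_sum, Prod.snd_sum,
        Finset.sum_apply,
        Dt_const, Dw_const, Dw_coord, Dt_coord, Dt_neg, Dw_neg,
        mul_ite, ite_mul, Finset.sum_ite_eq, Finset.sum_ite_eq']
      have hT : (∑ x : Fin n, ∑ x1 : Fin n, C x x1 l *
            ((-if x = i then lam C γ j x1 z else 0) + if x = j then lam C γ i x1 z else 0))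
          = (∑ x1 : Fin n, lam C γ i x1 z * C j x1 l)
            - ∑ x1 : Fin n, lam C γ j x1 z * C i x1 l := by
        have h2 : ∀ x x1 : Fin n, C x x1 l *
              ((-if x = i then lam C γ j x1 z else 0) + if x = j then lam C γ i x1 z else 0)
            = (if x = j then lam C γ i x1 z * C j x1 l else 0)
              - (if x = i then lam C γ j x1 z * C i x1 l else 0) := by
          intro x x1
          split_ifs with h1 h2 <;> subst_vars <;> ring
        rw [Finset.sum_congr rfl fun x _ => Finset.sum_congr rfl fun x1 _ => h2 x x1]
        simp only [Finset.sum_sub_distrib]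
        congr 1
        · rw [Finset.sum_comm]; simp [Finset.sum_ite_eq']
        · rw [Finset.sum_comm]; simp [Finset.sum_ite_eq']
      linear_combination hT
  · funext z
    simp only [rr, Pi.neg_apply]
    rw [show (∑ l, (lam C γ j l z * lamd C γ i l k z - lam C γ i l z * lamd C γ j l k z))
        = - ∑ l, (lam C γ i l z * lamd C γ j l k z - lam C γ j l z * lamd C γ i l k z) by
      rw [← Finset.sum_neg_distrib]; exact Finset.sum_congr rfl fun l _ => by ring]
    rw [show (∑ l, C j i l * lam C γ l k z) = - ∑ l, C i j l * lam C γ l k z by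
      rw [← Finset.sum_neg_distrib]
      exact Finset.sum_congr rfl fun l _ => by rw [hCskew j i l]; ring]
    rw [show (∑ l, (lam C γ j l z * C i l k - lam C γ i l z * C j l k))
        = - ∑ l, (lam C γ i l z * C j l k - lam C γ j l z * C i l k) by
      rw [← Finset.sum_neg_distrib]; exact Finset.sum_congr rfl fun l _ => by ring]
    ring
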